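/- Let (C, ⊗) be a tensor exact category: an exact category in the sense of Quillen with a monoidal structure (not necessarily symmetric) exact in each variable. Then the poset L(C, ⊗) of equivalence classes of objects under ⟨X⟩ = ⟨Y⟩ is a distributive lattice, and its ideal lattice Id(L(C,⊗)) is isomorphic to the lattice of radical thick tensor ideals of C. -/
import Mathlib


open CategoryTheory CategoryTheory.Limits CategoryTheory.MonoidalCategory

variable (C : Type*) [Category C] [Preadditive C] [HasZeroObject C]
  [HasBinaryBiproducts C] [MonoidalCategory C]

/-- An exact structure in the sense of Quillen on the additive category `C`, recorded by
its class of short exact sequences (kernel-cokernel pairs); among Quillen's axioms we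
record those relevant here: the class is closed under isomorphism of sequences and
contains the split exact sequences. -/
structure ExactStructure where
  /-- the distinguished short exact sequences `A ⟶ X ⟶ B` -/
  shortExact : ∀ ⦃A X B : C⦄, (A ⟶ X) → (X ⟶ B) → Prop
  /-- exact sequences are kernel-cokernel pairs -/
  comp_eq_zero : ∀ ⦃A X B : C⦄ (f : A ⟶ X) (g : X ⟶ B), shortExact f g → f ≫ g = 0
  /-- the class is closed under isomorphism of sequences -/
  iso_closed : ∀ ⦃A X B A' X' B' : C⦄ (f : A ⟶ X) (g : X ⟶ B)
    (e₁ : A ≅ A') (e₂ : X ≅ X') (e₃ : B ≅ B') (f' : A' ⟶ X') (g' : X' ⟶ B'),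
    f ≫ e₂.hom = e₁.hom ≫ f' → g ≫ e₃.hom = e₂.hom ≫ g' →
    shortExact f g → shortExact f' g'
  /-- split exact sequences are exact -/
  split : ∀ A B : C, shortExact (biprod.inl : A ⟶ A ⊞ B) (biprod.snd : A ⊞ B ⟶ B)

variable {C} in
/-- A thick subcategory of the exact category `(C, E)`: a full additive subcategory
(closed under isomorphisms, zero objects, finite direct sums and direct summands)
with the two-out-of-three property for exact sequences. -/
def IsThick (E : ExactStructure C) (S : Set C) : Prop :=
  (∀ X : C, IsZero X → X ∈ S) ∧
  (∀ X Y : C, (X ≅ Y) → X ∈ S → Y ∈ S) ∧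
  (∀ X Y : C, (∃ (i : X ⟶ Y) (r : Y ⟶ X), i ≫ r = 𝟙 X) → Y ∈ S → X ∈ S) ∧
  (∀ ⦃A X B : C⦄ (f : A ⟶ X) (g : X ⟶ B), E.shortExact f g →
    ((A ∈ S → X ∈ S → B ∈ S) ∧ (A ∈ S → B ∈ S → X ∈ S) ∧ (X ∈ S → B ∈ S → A ∈ S)))

variable {C} in
/-- A radical thick tensor ideal of the tensor exact category `(C, E, ⊗)`. -/
def IsRadThickTensorIdeal (E : ExactStructure C) (S : Set C) : Prop :=
  IsThick E S ∧
  (∀ X Y : C, X ∈ S ∨ Y ∈ S → (X ⊗ Y) ∈ S) ∧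
  (∀ X : C, (X ⊗ X) ∈ S → X ∈ S)

variable {C} in
/-- `⟨X⟩`, the radical thick tensor ideal generated by `X`. -/
def rgen (E : ExactStructure C) (X : C) : Set C :=
  ⋂₀ {S : Set C | IsRadThickTensorIdeal E S ∧ X ∈ S}

variable {C} in
/-- The equivalence relation `X ≈ Y` iff `⟨X⟩ = ⟨Y⟩`. -/
def rSetoid (E : ExactStructure C) : Setoid C :=
  ⟨fun X Y => rgen E X = rgen E Y, fun _ => rfl, Eq.symm, Eq.trans⟩

variable {C} in
/-- `L(C,⊗) = Ob C / ≈`. -/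
def LQ (E : ExactStructure C) := Quotient (rSetoid E)

variable {C} in
/-- The class `⟨X⟩ ∈ L(C,⊗)` of an object `X`. -/
def cls (E : ExactStructure C) (X : C) : LQ E := Quotient.mk (rSetoid E) X

variable {C} in
/-- Ideals of the lattice `L(C,⊗)`: downward closed subsets containing the bottom
and closed under the join `⟨X⟩ ∨ ⟨Y⟩ = ⟨X ⊞ Y⟩`. -/
def IsIdealQ (E : ExactStructure C) (I : Set (LQ E)) : Prop :=
  (∀ Z : C, IsZero Z → cls E Z ∈ I) ∧
  (∀ X Y : C, rgen E X ⊆ rgen E Y → cls E Y ∈ I → cls E X ∈ I) ∧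
  (∀ X Y : C, cls E X ∈ I → cls E Y ∈ I → cls E (X ⊞ Y) ∈ I)

namespace Stmt19Aux

variable {C}
variable (E : ExactStructure C)

lemma mem_rgen_iff {X W : C} :
    W ∈ rgen E X ↔ ∀ S : Set C, IsRadThickTensorIdeal E S → X ∈ S → W ∈ S := by
  constructor
  · intro h S hS hX
    exact h S ⟨hS, hX⟩
  · intro h S hS
    exact h S hS.1 hS.2

lemma self_mem_rgen (X : C) : X ∈ rgen E X :=
  (mem_rgen_iff E).mpr fun _ _ hX => hX

lemma isRad_rgen (X : C) : IsRadThickTensorIdeal E (rgen E X) := by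
  refine ⟨⟨?_, ?_, ?_, ?_⟩, ?_, ?_⟩
  · intro Z hZ S hS
    exact hS.1.1.1 Z hZ
  · intro U V e hU S hS
    exact hS.1.1.2.1 U V e (hU S hS)
  · intro U V h hV S hS
    exact hS.1.1.2.2.1 U V h (hV S hS)
  · intro A X' B f g hfg
    refine ⟨?_, ?_, ?_⟩ <;> intro h1 h2 S hS
    · exact (hS.1.1.2.2.2 f g hfg).1 (h1 S hS) (h2 S hS)
    · exact (hS.1.1.2.2.2 f g hfg).2.1 (h1 S hS) (h2 S hS)
    · exact (hS.1.1.2.2.2 f g hfg).2.2 (h1 S hS) (h2 S hS)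
  · intro U V h S hS
    rcases h with h | h
    · exact hS.1.2.1 U V (Or.inl (h S hS))
    · exact hS.1.2.1 U V (Or.inr (h S hS))
  · intro U h S hS
    exact hS.1.2.2 U (h S hS)

lemma rgen_minimal {X : C} {S : Set C} (hS : IsRadThickTensorIdeal E S) (hX : X ∈ S) :
    rgen E X ⊆ S :=
  fun _ hW => (mem_rgen_iff E).mp hW S hS hX

lemma mem_of_iso {S : Set C} (hS : IsRadThickTensorIdeal E S) {X Y : C} (e : X ≅ Y)
    (h : X ∈ S) : Y ∈ S :=
  hS.1.2.1 X Y e h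

/-- `A ⊗ B ∈ S` implies `B ⊗ A ∈ S` for a radical tensor ideal. -/
lemma swap_mem {S : Set C} (hS : IsRadThickTensorIdeal E S) {A B : C}
    (h : (A ⊗ B) ∈ S) : (B ⊗ A) ∈ S := by
  apply hS.2.2 (B ⊗ A)
  have h1 : ((A ⊗ B) ⊗ A) ∈ S := hS.2.1 _ _ (Or.inl h)
  have h2 : (B ⊗ ((A ⊗ B) ⊗ A)) ∈ S := hS.2.1 _ _ (Or.inr h1)
  exact mem_of_iso E hS
    ((whiskerLeftIso B (α_ A B A)) ≪≫ (α_ B A (B ⊗ A)).symm) h2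

/-- `A ⊗ B ∈ S` implies `A ⊗ (M ⊗ B) ∈ S` for a radical tensor ideal. -/
lemma middle_mem {S : Set C} (hS : IsRadThickTensorIdeal E S) {A B : C} (M : C)
    (h : (A ⊗ B) ∈ S) : (A ⊗ (M ⊗ B)) ∈ S := by
  have h1 : (B ⊗ A) ∈ S := swap_mem E hS h
  have h2 : ((B ⊗ A) ⊗ M) ∈ S := hS.2.1 _ _ (Or.inl h1)
  have h3 : (B ⊗ (A ⊗ M)) ∈ S := mem_of_iso E hS (α_ B A M) h2
  have h4 : ((A ⊗ M) ⊗ B) ∈ S := swap_mem E hS h3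
  exact mem_of_iso E hS (α_ A M B) h4

lemma isZero_tensor_right {Z : C} (Y : C) (h2 : (tensorRight Y).Additive)
    (hZ : IsZero Z) : IsZero (Z ⊗ Y) := by
  haveI := h2
  rw [IsZero.iff_id_eq_zero] at hZ ⊢
  have h0 : (tensorRight Y).map (𝟙 Z) = 0 := by rw [hZ, Functor.map_zero]
  simpa using h0

lemma isZero_tensor_left {Z : C} (W : C) (h2 : (tensorLeft W).Additive)
    (hZ : IsZero Z) : IsZero (W ⊗ Z) := by
  haveI := h2
  rw [IsZero.iff_id_eq_zero] at hZ ⊢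
  have h0 : (tensorLeft W).map (𝟙 Z) = 0 := by rw [hZ, Functor.map_zero]
  simpa using h0

/-- `{U | U ⊗ Y ∈ S}` is a radical thick tensor ideal. -/
lemma leftT_isRad (hadd : ∀ X : C, (tensorLeft X).Additive ∧ (tensorRight X).Additive)
    (hexr : ∀ ⦃A X B : C⦄ (W : C) (f : A ⟶ X) (g : X ⟶ B),
      E.shortExact f g → E.shortExact (f ▷ W) (g ▷ W))
    {S : Set C} (hS : IsRadThickTensorIdeal E S) (Y : C) :
    IsRadThickTensorIdeal E {U : C | (U ⊗ Y) ∈ S} := by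
  refine ⟨⟨?_, ?_, ?_, ?_⟩, ?_, ?_⟩
  · intro Z hZ
    exact hS.1.1 _ (isZero_tensor_right Y (hadd Y).2 hZ)
  · intro U V e hU
    exact mem_of_iso E hS (whiskerRightIso e Y) hU
  · intro U V ⟨i, r, hir⟩ hV
    refine hS.1.2.2.1 _ _ ⟨i ▷ Y, r ▷ Y, ?_⟩ hV
    rw [← comp_whiskerRight, hir, id_whiskerRight]
  · intro A X' B f g hfg
    exact hS.1.2.2.2 (f ▷ Y) (g ▷ Y) (hexr Y f g hfg)
  · intro U V h
    show ((U ⊗ V) ⊗ Y) ∈ S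
    rcases h with h | h
    · exact mem_of_iso E hS (α_ U V Y).symm (middle_mem E hS V h)
    · exact mem_of_iso E hS (α_ U V Y).symm (hS.2.1 _ _ (Or.inr h))
  · intro U h
    have h1 : (U ⊗ (U ⊗ Y)) ∈ S := mem_of_iso E hS (α_ U U Y) h
    have h2 : (U ⊗ (Y ⊗ (U ⊗ Y))) ∈ S := middle_mem E hS Y h1
    exact hS.2.2 (U ⊗ Y) (mem_of_iso E hS (α_ U Y (U ⊗ Y)).symm h2)

/-- `{V | W ⊗ V ∈ S}` is a radical thick tensor ideal. -/
lemma rightT_isRad (hadd : ∀ X : C, (tensorLeft X).Additive ∧ (tensorRight X).Additive)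
    (hexl : ∀ ⦃A X B : C⦄ (W : C) (f : A ⟶ X) (g : X ⟶ B),
      E.shortExact f g → E.shortExact (W ◁ f) (W ◁ g))
    {S : Set C} (hS : IsRadThickTensorIdeal E S) (W : C) :
    IsRadThickTensorIdeal E {V : C | (W ⊗ V) ∈ S} := by
  refine ⟨⟨?_, ?_, ?_, ?_⟩, ?_, ?_⟩
  · intro Z hZ
    exact hS.1.1 _ (isZero_tensor_left W (hadd W).1 hZ)
  · intro U V e hU
    exact mem_of_iso E hS (whiskerLeftIso W e) hU
  · intro U V ⟨i, r, hir⟩ hV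
    refine hS.1.2.2.1 _ _ ⟨W ◁ i, W ◁ r, ?_⟩ hV
    rw [← MonoidalCategory.whiskerLeft_comp, hir, MonoidalCategory.whiskerLeft_id]
  · intro A X' B f g hfg
    exact hS.1.2.2.2 (W ◁ f) (W ◁ g) (hexl W f g hfg)
  · intro U V h
    show (W ⊗ (U ⊗ V)) ∈ S
    rcases h with h | h
    · exact mem_of_iso E hS (α_ W U V) (hS.2.1 _ _ (Or.inl h))
    · exact middle_mem E hS U h
  · intro U h
    have h1 : ((W ⊗ U) ⊗ U) ∈ S := mem_of_iso E hS (α_ W U U).symm h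
    have h2 : ((W ⊗ U) ⊗ (W ⊗ U)) ∈ S := middle_mem E hS W h1
    exact hS.2.2 (W ⊗ U) h2

lemma rgen_tensor (hadd : ∀ X : C, (tensorLeft X).Additive ∧ (tensorRight X).Additive)
    (hexl : ∀ ⦃A X B : C⦄ (W : C) (f : A ⟶ X) (g : X ⟶ B),
      E.shortExact f g → E.shortExact (W ◁ f) (W ◁ g))
    (hexr : ∀ ⦃A X B : C⦄ (W : C) (f : A ⟶ X) (g : X ⟶ B),
      E.shortExact f g → E.shortExact (f ▷ W) (g ▷ W))
    (X Y : C) : rgen E (X ⊗ Y) = rgen E X ∩ rgen E Y := by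
  apply subset_antisymm
  · intro W hW
    exact ⟨rgen_minimal E (isRad_rgen E X)
        ((isRad_rgen E X).2.1 X Y (Or.inl (self_mem_rgen E X))) hW,
      rgen_minimal E (isRad_rgen E Y)
        ((isRad_rgen E Y).2.1 X Y (Or.inr (self_mem_rgen E Y))) hW⟩
  · rintro W ⟨hWX, hWY⟩
    rw [mem_rgen_iff]
    intro S hS hXY
    have h1 : (W ⊗ Y) ∈ S :=
      (mem_rgen_iff E).mp hWX _ (leftT_isRad E hadd hexr hS Y) hXY
    have h2 : (W ⊗ W) ∈ S :=
      (mem_rgen_iff E).mp hWY _ (rightT_isRad E hadd hexl hS W) h1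
    exact hS.2.2 W h2

lemma left_mem_rgen_biprod (A B : C) : A ∈ rgen E (A ⊞ B) :=
  (isRad_rgen E (A ⊞ B)).1.2.2.1 A (A ⊞ B) ⟨biprod.inl, biprod.fst, biprod.inl_fst⟩
    (self_mem_rgen E (A ⊞ B))

lemma right_mem_rgen_biprod (A B : C) : B ∈ rgen E (A ⊞ B) :=
  (isRad_rgen E (A ⊞ B)).1.2.2.1 B (A ⊞ B) ⟨biprod.inr, biprod.snd, biprod.inr_snd⟩
    (self_mem_rgen E (A ⊞ B))

lemma biprod_mem {S : Set C} (hS : IsRadThickTensorIdeal E S) {A B : C}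
    (hA : A ∈ S) (hB : B ∈ S) : (A ⊞ B) ∈ S :=
  (hS.1.2.2.2 _ _ (E.split A B)).2.1 hA hB

/-- The ideal of `L(C,⊗)` associated to a radical thick tensor ideal. -/
def idealOf (S : Set C) : Set (LQ E) := cls E '' S

lemma mem_idealOf_iff {S : Set C} (hS : IsRadThickTensorIdeal E S) (X : C) :
    cls E X ∈ idealOf E S ↔ X ∈ S := by
  constructor
  · rintro ⟨X', hX', hc⟩
    have hr : rgen E X' = rgen E X := Quotient.exact hc
    refine rgen_minimal E hS hX' ?_
    rw [hr]
    exact self_mem_rgen E X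
  · intro h
    exact ⟨X, h, rfl⟩

lemma isIdealQ_idealOf {S : Set C} (hS : IsRadThickTensorIdeal E S) :
    IsIdealQ E (idealOf E S) := by
  refine ⟨?_, ?_, ?_⟩
  · intro Z hZ
    exact (mem_idealOf_iff E hS Z).mpr (hS.1.1 Z hZ)
  · intro X Y h hY
    refine (mem_idealOf_iff E hS X).mpr ?_
    exact rgen_minimal E hS ((mem_idealOf_iff E hS Y).mp hY) (h (self_mem_rgen E X))
  · intro X Y hX hY
    exact (mem_idealOf_iff E hS _).mpr
      (biprod_mem E hS ((mem_idealOf_iff E hS X).mp hX) ((mem_idealOf_iff E hS Y).mp hY))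

lemma isRad_preimage
    (hadd : ∀ X : C, (tensorLeft X).Additive ∧ (tensorRight X).Additive)
    (hexl : ∀ ⦃A X B : C⦄ (W : C) (f : A ⟶ X) (g : X ⟶ B),
      E.shortExact f g → E.shortExact (W ◁ f) (W ◁ g))
    (hexr : ∀ ⦃A X B : C⦄ (W : C) (f : A ⟶ X) (g : X ⟶ B),
      E.shortExact f g → E.shortExact (f ▷ W) (g ▷ W))
    {I : Set (LQ E)} (hI : IsIdealQ E I) :
    IsRadThickTensorIdeal E {X : C | cls E X ∈ I} := by
  have hT := rgen_tensor E hadd hexl hexr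
  refine ⟨⟨?_, ?_, ?_, ?_⟩, ?_, ?_⟩
  · intro Z hZ
    exact hI.1 Z hZ
  · intro X Y e hX
    refine hI.2.1 Y X ?_ hX
    exact rgen_minimal E (isRad_rgen E X) (mem_of_iso E (isRad_rgen E X) e (self_mem_rgen E X))
  · intro X Y h hY
    refine hI.2.1 X Y ?_ hY
    exact rgen_minimal E (isRad_rgen E Y) ((isRad_rgen E Y).1.2.2.1 X Y h (self_mem_rgen E Y))
  · intro A X' B f g hfg
    refine ⟨?_, ?_, ?_⟩ <;> intro h1 h2
    · refine hI.2.1 B (A ⊞ X') ?_ (hI.2.2 A X' h1 h2)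
      exact rgen_minimal E (isRad_rgen E (A ⊞ X'))
        (((isRad_rgen E (A ⊞ X')).1.2.2.2 f g hfg).1
          (left_mem_rgen_biprod E A X') (right_mem_rgen_biprod E A X'))
    · refine hI.2.1 X' (A ⊞ B) ?_ (hI.2.2 A B h1 h2)
      exact rgen_minimal E (isRad_rgen E (A ⊞ B))
        (((isRad_rgen E (A ⊞ B)).1.2.2.2 f g hfg).2.1
          (left_mem_rgen_biprod E A B) (right_mem_rgen_biprod E A B))
    · refine hI.2.1 A (X' ⊞ B) ?_ (hI.2.2 X' B h1 h2)
      exact rgen_minimal E (isRad_rgen E (X' ⊞ B))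
        (((isRad_rgen E (X' ⊞ B)).1.2.2.2 f g hfg).2.2
          (left_mem_rgen_biprod E X' B) (right_mem_rgen_biprod E X' B))
  · intro X Y h
    rcases h with h | h
    · refine hI.2.1 (X ⊗ Y) X ?_ h
      rw [hT]
      exact Set.inter_subset_left
    · refine hI.2.1 (X ⊗ Y) Y ?_ h
      rw [hT]
      exact Set.inter_subset_right
  · intro X h
    refine hI.2.1 X (X ⊗ X) ?_ h
    rw [hT]
    exact fun W hW => ⟨hW, hW⟩

end Stmt19Aux

open Stmt19Aux in
theorem stmt19 (E : ExactStructure C)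
    -- the monoidal structure is additive and exact in each variable:
    (hadd : ∀ X : C, (tensorLeft X).Additive ∧ (tensorRight X).Additive)
    (hexl : ∀ ⦃A X B : C⦄ (W : C) (f : A ⟶ X) (g : X ⟶ B),
      E.shortExact f g → E.shortExact (W ◁ f) (W ◁ g))
    (hexr : ∀ ⦃A X B : C⦄ (W : C) (f : A ⟶ X) (g : X ⟶ B),
      E.shortExact f g → E.shortExact (f ▷ W) (g ▷ W)) :
    -- `L(C,⊗)` is a distributive lattice:
    ((∀ (X Z : C), IsZero Z → rgen E Z ⊆ rgen E X) ∧
     (∀ X Y : C, rgen E X ⊆ rgen E (X ⊞ Y) ∧ rgen E Y ⊆ rgen E (X ⊞ Y)) ∧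
     (∀ X Y Z : C, rgen E X ⊆ rgen E Z → rgen E Y ⊆ rgen E Z →
        rgen E (X ⊞ Y) ⊆ rgen E Z) ∧
     (∀ X Y : C, rgen E (X ⊗ Y) = rgen E X ∩ rgen E Y) ∧
     (∀ X Y Z : C, rgen E X ∩ rgen E (Y ⊞ Z) ⊆ rgen E ((X ⊗ Y) ⊞ (X ⊗ Z)))) ∧
    -- and `Id(L(C,⊗))` is isomorphic to the lattice of radical thick tensor ideals:
    ∃ e : {S : Set C // IsRadThickTensorIdeal E S} ≃o {I : Set (LQ E) // IsIdealQ E I},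
      ∀ (S : {S : Set C // IsRadThickTensorIdeal E S}) (X : C),
        cls E X ∈ (e S).1 ↔ X ∈ S.1 := by
  have hT := rgen_tensor E hadd hexl hexr
  constructor
  · refine ⟨?_, ?_, ?_, hT, ?_⟩
    · intro X Z hZ
      exact rgen_minimal E (isRad_rgen E X) ((isRad_rgen E X).1.1 Z hZ)
    · intro X Y
      exact ⟨rgen_minimal E (isRad_rgen E (X ⊞ Y)) (left_mem_rgen_biprod E X Y),
        rgen_minimal E (isRad_rgen E (X ⊞ Y)) (right_mem_rgen_biprod E X Y)⟩
    · intro X Y Z h1 h2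
      exact rgen_minimal E (isRad_rgen E Z)
        (biprod_mem E (isRad_rgen E Z) (h1 (self_mem_rgen E X)) (h2 (self_mem_rgen E Y)))
    · intro X Y Z
      rw [← hT]
      apply rgen_minimal E (isRad_rgen E ((X ⊗ Y) ⊞ (X ⊗ Z)))
      exact ((isRad_rgen E ((X ⊗ Y) ⊞ (X ⊗ Z))).1.2.2.2 _ _
          (hexl X (biprod.inl : Y ⟶ Y ⊞ Z) (biprod.snd : Y ⊞ Z ⟶ Z) (E.split Y Z))).2.1
        (left_mem_rgen_biprod E (X ⊗ Y) (X ⊗ Z))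
        (right_mem_rgen_biprod E (X ⊗ Y) (X ⊗ Z))
  · refine ⟨⟨⟨fun S => ⟨idealOf E S.1, isIdealQ_idealOf E S.2⟩,
      fun I => ⟨{X : C | cls E X ∈ I.1}, isRad_preimage E hadd hexl hexr I.2⟩,
      ?_, ?_⟩, ?_⟩, ?_⟩
    · intro S
      exact Subtype.ext (Set.ext fun X => mem_idealOf_iff E S.2 X)
    · intro I
      refine Subtype.ext (Set.ext fun c => ?_)
      constructor
      · rintro ⟨X, hX, rfl⟩
        exact hX
      · intro hc
        obtain ⟨X, rfl⟩ := c.exists_rep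
        exact ⟨X, hc, rfl⟩
    · intro S S'
      constructor
      · intro h X hX
        exact (mem_idealOf_iff E S'.2 X).mp (h ((mem_idealOf_iff E S.2 X).mpr hX))
      · rintro h c ⟨X, hX, rfl⟩
        exact ⟨X, h hX, rfl⟩
    · intro S X
      exact mem_idealOf_iff E S.2 X
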